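/- arXiv:1404.7054 — 6 statements merged into one kernel-verified Lean document; each statement's English description precedes it below -/
import Mathlib

section
/- Let μ₁, …, μ_n be Borel probability measures on ℝ and let P be a Borel probability measure on ℝⁿ whose i-th coordinate marginal equals μ_i for each i. If there is a monotone Borel set M ⊆ ℝⁿ with P(M) = 1, then P = π*_n, the quantile coupling of μ₁, …, μ_n. -/
/-!
Two finite measures on `ℝⁿ` agree as soon as they agree on all lower orthants `Iic a`. Since `P`
is carried by a chain `M`, the events `M ∩ {z | z i ≤ a i}` are nested, so `P (Iic a)` is the
smallest of the marginal masses `μ i (Iic (a i))`. The quantile coupling gives the same value: by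
the Galois connection `q_i x ≤ a_i ↔ x ≤ F_i a_i`, the orthant pulls back to `(0, min_i F_i a_i]`.
-/

open MeasureTheory

/-- The quantile function of a probability measure `μ` on `ℝ`:
`quantile μ x = inf {y : μ((-∞, y]) ≥ x}`. -/
noncomputable def quantile (μ : Measure ℝ) (x : ℝ) : ℝ :=
  sInf {y : ℝ | x ≤ (μ (Set.Iic y)).toReal}

/-- The quantile coupling `π*_n` of probability measures `μ₁,…,μ_n` on `ℝ`: the
push-forward of Lebesgue measure on `(0,1)` under `x ↦ (q₁(x),…,q_n(x))`. -/
noncomputable def quantileCoupling {n : ℕ} (μ : Fin n → Measure ℝ) :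
    Measure (Fin n → ℝ) :=
  ((volume : Measure ℝ).restrict (Set.Ioo 0 1)).map (fun x i => quantile (μ i) x)

open Set ProbabilityTheory

section quantile

variable {μ : Measure ℝ} {x : ℝ}

lemma quantile_eq_sInf_cdf [IsProbabilityMeasure μ] :
    quantile μ x = sInf {y | x ≤ cdf μ y} := by
  simp only [quantile, cdf_eq_real, measureReal_def]

lemma nonempty_setOf_le_cdf (hx : x < 1) : {y | x ≤ cdf μ y}.Nonempty :=
  ((tendsto_cdf_atTop μ).eventually_const_le hx).exists

lemma bddBelow_setOf_le_cdf (hx : 0 < x) : BddBelow {y | x ≤ cdf μ y} := by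
  obtain ⟨b, hb⟩ := ((tendsto_cdf_atBot μ).eventually_lt_const hx).exists_forall_of_atBot
  refine ⟨b, fun y hy => le_of_not_gt fun hyb => ?_⟩
  exact (hy.trans_lt (hb y hyb.le)).false

lemma quantile_le_iff [IsProbabilityMeasure μ] (hx : x ∈ Ioo 0 1) (a : ℝ) :
    quantile μ x ≤ a ↔ x ≤ cdf μ a := by
  rw [quantile_eq_sInf_cdf]
  refine ⟨fun h => ?_, fun h => csInf_le (bddBelow_setOf_le_cdf hx.1) h⟩
  have hgt : ∀ b : Ioi a, x ≤ cdf μ b := fun b => by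
    obtain ⟨y, hy, hyb⟩ := (csInf_lt_iff (bddBelow_setOf_le_cdf hx.1)
      (nonempty_setOf_le_cdf hx.2)).1 (h.trans_lt b.2)
    exact hy.trans (monotone_cdf μ hyb.le)
  rw [← (cdf μ).iInf_Ioi_eq a]
  exact le_ciInf hgt

lemma monotoneOn_quantile [IsProbabilityMeasure μ] : MonotoneOn (quantile μ) (Ioo 0 1) := by
  intro x hx y hy hxy
  simp only [quantile_eq_sInf_cdf]
  exact csInf_le_csInf (bddBelow_setOf_le_cdf hx.1) (nonempty_setOf_le_cdf hy.2)
    fun z hz => hxy.trans hz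

end quantile

lemma MeasureTheory.Measure.ext_of_Iic_pi {ι : Type*} [Finite ι] (μ ν : Measure (ι → ℝ))
    [IsFiniteMeasure μ] (h : ∀ a, μ (Iic a) = ν (Iic a)) : μ = ν := by
  let C : Set (Set (ι → ℝ)) := pi univ '' pi univ fun _ => range Iic
  have hC_Iic : ∀ s ∈ C, ∃ a, s = Iic a := by
    rintro _ ⟨t, ht, rfl⟩
    choose a ha using fun i => ht i (mem_univ i)
    exact ⟨a, by simp only [← pi_univ_Iic, ha]⟩
  have hgen : MeasurableSpace.pi = MeasurableSpace.generateFrom C := by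
    refine (generateFrom_eq_pi (fun _ => (borel_eq_generateFrom_Iic ℝ).symm) fun _ => ?_).symm
    exact ⟨fun k : ℕ => Iic (k : ℝ), fun _ => mem_range_self _,
      eq_univ_of_forall fun x => mem_iUnion.2 (exists_nat_ge x)⟩
  refine ext_of_generateFrom_of_iUnion C (fun k : ℕ => Iic fun _ => (k : ℝ)) hgen
    (IsPiSystem.pi fun _ => isPiSystem_Iic) ?_ (fun k => ?_) (fun _ => measure_ne_top _ _) ?_
  · refine eq_univ_of_forall fun z => mem_iUnion.2 ?_
    obtain ⟨b, hb⟩ := Finite.bddAbove_range z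
    obtain ⟨k, hk⟩ := exists_nat_ge b
    exact ⟨k, fun i => (hb (mem_range_self i)).trans hk⟩
  · exact ⟨fun _ => Iic (k : ℝ), fun _ _ => mem_range_self _, pi_univ_Iic _⟩
  · intro s hs
    obtain ⟨a, rfl⟩ := hC_Iic s hs
    exact h a

lemma IsChain.exists_forall_inter_setOf_apply_le_subset {ι α : Type*} [Finite ι] [Nonempty ι]
    [Preorder α] {M : Set (ι → α)} (hM : IsChain (· ≤ ·) M) (a : ι → α) :
    ∃ j, M ∩ {z | z j ≤ a j} ⊆ Iic a := by
  let g : ι → Set (ι → α) := fun i => M ∩ {z | z i ≤ a i}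
  have hdir : Directed (· ≥ ·) g := by
    intro i k
    by_cases hik : g i ⊆ g k
    · exact ⟨i, le_rfl, hik⟩
    obtain ⟨x, ⟨hxM, hxi⟩, hxk⟩ := not_subset.1 hik
    refine ⟨k, fun y ⟨hyM, hyk⟩ => ⟨hyM, ?_⟩, le_rfl⟩
    rcases hM.total hxM hyM with hxy | hyx
    · exact absurd ⟨hxM, (hxy k).trans hyk⟩ hxk
    · exact (hyx i).trans hxi
  obtain ⟨j, hj⟩ := hdir.finite_le id
  exact ⟨j, fun z hz i => (hj i hz).2⟩

lemma MeasureTheory.Measure.exists_measure_Iic_eq_of_isChain {ι α : Type*} [Finite ι]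
    [Nonempty ι] [Preorder α] [MeasurableSpace (ι → α)] (P : Measure (ι → α))
    {M : Set (ι → α)} (hM : IsChain (· ≤ ·) M) (hPM : P Mᶜ = 0) (a : ι → α) :
    ∃ j, P (Iic a) = P {z | z j ≤ a j} ∧ ∀ i, P {z | z j ≤ a j} ≤ P {z | z i ≤ a i} := by
  obtain ⟨j, hj⟩ := hM.exists_forall_inter_setOf_apply_le_subset a
  have hPj : P (Iic a) = P {z | z j ≤ a j} := by
    rw [← measure_inter_conull hPM, ← measure_inter_conull (s := {z | z j ≤ a j}) hPM]
    exact congrArg P (subset_antisymm (fun z hz => ⟨hz.1 j, hz.2⟩)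
      fun z hz => ⟨hj ⟨hz.2, hz.1⟩, hz.2⟩)
  exact ⟨j, hPj, fun i => hPj ▸ measure_mono fun z hz => hz i⟩

lemma Real.volume_Iic_inter_Ioo_zero_one {c : ℝ} (hc : c ≤ 1) :
    volume (Iic c ∩ Ioo 0 1) = ENNReal.ofReal c := by
  refine le_antisymm ?_ ?_
  · calc volume (Iic c ∩ Ioo 0 1) ≤ volume (Ioc 0 c) :=
          measure_mono fun x hx => ⟨hx.2.1, hx.1⟩
      _ = ENNReal.ofReal c := by rw [Real.volume_Ioc, sub_zero]
  · calc ENNReal.ofReal c = volume (Ioo 0 c) := by rw [Real.volume_Ioo, sub_zero]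
      _ ≤ volume (Iic c ∩ Ioo 0 1) :=
          measure_mono fun x hx => ⟨hx.2.le, hx.1, hx.2.trans_le hc⟩

lemma aemeasurable_quantile_pi {ι : Type*} [Countable ι] (μ : ι → Measure ℝ)
    [∀ i, IsProbabilityMeasure (μ i)] :
    AEMeasurable (fun x i => quantile (μ i) x) (volume.restrict (Ioo 0 1)) :=
  aemeasurable_pi_lambda _ fun _ =>
    aemeasurable_restrict_of_monotoneOn measurableSet_Ioo monotoneOn_quantile

section quantileCoupling

variable {n : ℕ} (μ : Fin n → Measure ℝ) [∀ i, IsProbabilityMeasure (μ i)]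

instance isProbabilityMeasure_quantileCoupling : IsProbabilityMeasure (quantileCoupling μ) :=
  haveI : IsProbabilityMeasure (volume.restrict (Ioo (0 : ℝ) 1)) :=
    ⟨by rw [Measure.restrict_apply_univ, Real.volume_Ioo, sub_zero, ENNReal.ofReal_one]⟩
  Measure.isProbabilityMeasure_map (aemeasurable_quantile_pi μ)

lemma quantileCoupling_Iic (a : Fin n → ℝ) {j : Fin n}
    (hj : ∀ i, μ j (Iic (a j)) ≤ μ i (Iic (a i))) :
    quantileCoupling μ (Iic a) = μ j (Iic (a j)) := by
  have hcdf : ∀ i, cdf (μ j) (a j) ≤ cdf (μ i) (a i) := fun i => by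
    simpa only [cdf_eq_real, measureReal_def] using
      ENNReal.toReal_mono (measure_ne_top _ _) (hj i)
  have hpre : (fun x i => quantile (μ i) x) ⁻¹' Iic a ∩ Ioo 0 1 =
      Iic (cdf (μ j) (a j)) ∩ Ioo 0 1 := by
    ext x
    simp only [mem_inter_iff, mem_preimage, mem_Iic]
    exact and_congr_left fun hx => ⟨fun h => (quantile_le_iff hx _).1 (h j),
      fun h i => (quantile_le_iff hx _).2 (h.trans (hcdf i))⟩
  rw [quantileCoupling, Measure.map_apply_of_aemeasurable (aemeasurable_quantile_pi μ)
    measurableSet_Iic, Measure.restrict_apply' measurableSet_Ioo, hpre,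
    Real.volume_Iic_inter_Ioo_zero_one (cdf_le_one _ _), ofReal_cdf]

end quantileCoupling

/-- **Lemma.** If a probability measure `P` on `ℝⁿ` with marginals `μ₁,…,μ_n` is
concentrated on a monotone Borel set (a set on which the coordinatewise order is total),
then `P` equals the quantile coupling `π*_n`. -/
theorem statement5
    {n : ℕ} (μ : Fin n → Measure ℝ) [∀ i, IsProbabilityMeasure (μ i)]
    (P : Measure (Fin n → ℝ)) [IsProbabilityMeasure P]
    (hmarg : ∀ i, P.map (fun z => z i) = μ i)
    (M : Set (Fin n → ℝ)) (hM : MeasurableSet M)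
    (hmono : ∀ x ∈ M, ∀ y ∈ M, x ≤ y ∨ y ≤ x)
    (hPM : P M = 1) :
    P = quantileCoupling μ := by
  refine Measure.ext_of_Iic_pi P _ fun a => ?_
  rcases isEmpty_or_nonempty (Fin n) with _ | _
  · rw [show Iic a = univ from eq_univ_of_forall fun _ i => isEmptyElim i, measure_univ,
      measure_univ]
  have hPi : ∀ i, P {z | z i ≤ a i} = μ i (Iic (a i)) := fun i => by
    rw [← hmarg i, Measure.map_apply (measurable_pi_apply i) measurableSet_Iic]
    rfl
  obtain ⟨j, hPj, hmin⟩ := P.exists_measure_Iic_eq_of_isChain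
    (fun x hx y hy _ => hmono x hx y hy) ((prob_compl_eq_zero_iff hM).2 hPM) a
  rw [hPj, hPi, quantileCoupling_Iic μ a fun i => by simpa only [hPi] using hmin i]
end

section
/- Let X, Y be Polish spaces and c : X × Y → ℝ. A set Γ ⊆ X × Y is c-cyclically monotone if and only if for every finite measure α concentrated on finitely many points of Γ, one has ∫ c dα ≤ ∫ c dα′ for every finite measure α′ concentrated on finitely many points of X × Y that has the same total mass and the same two marginals as α. -/
open MeasureTheory

/-- A set `Γ ⊆ X × Y` is `c`-cyclically monotone if for all finite families
`(x₁,y₁),…,(x_l,y_l) ∈ Γ` one has `Σ c(xᵢ,yᵢ) ≤ Σ c(xᵢ,y_{i+1})` (indices cyclic). -/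
def CCyclicallyMonotone {X Y : Type*} (c : X × Y → ℝ) (Γ : Set (X × Y)) : Prop :=
  ∀ (l : ℕ) (pts : Fin (l + 1) → X × Y), (∀ i, pts i ∈ Γ) →
    ∑ i, c (pts i) ≤ ∑ i, c ((pts i).1, (pts (i + 1)).2)

/-! For a finite `c`-cyclically monotone set `S`, the potential `φ x`, the infimum of the chain
costs `c(x, y₀) - c(x₀, y₀) + c(x₀, y₁) - c(x₁, y₁) + ⋯` over chains `(xᵢ, yᵢ)` in `S`, is finite:
a chain closed up into a cycle has nonnegative cost, so each chain cost is at least one of the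
finitely many numbers `c(x, y) - c(x', y)`. Putting `ψ y = c(x, y) - φ x` for `(x, y) ∈ S` gives
`φ x + ψ y ≤ c(x, y)`, with equality on `S`. Since the integral of `φ ⊕ ψ` only depends on the
marginals, `∫ c dα = ∫ φ ⊕ ψ dα = ∫ φ ⊕ ψ dα' ≤ ∫ c dα'`. Conversely, a cycle `(xᵢ, yᵢ)` is tested
with `α = ∑ δ(xᵢ, yᵢ)` and `α' = ∑ δ(xᵢ, yᵢ₊₁)`. -/

section Potential

variable {X Y : Type*} {c : X × Y → ℝ} {Γ S : Set (X × Y)}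

theorem CCyclicallyMonotone.mono (h : CCyclicallyMonotone c Γ) (hS : S ⊆ Γ) :
    CCyclicallyMonotone c S :=
  fun l pts hpts => h l pts fun i => hS (hpts i)

variable (c) in
def chainCost {n : ℕ} (x : X) (pts : Fin (n + 1) → X × Y) : ℝ :=
  c (x, (pts 0).2) - c (pts 0) +
    ∑ i : Fin n, (c ((pts i.castSucc).1, (pts i.succ).2) - c (pts i.succ))

theorem chainCost_cons {n : ℕ} (x : X) (p : X × Y) (pts : Fin (n + 1) → X × Y) :
    chainCost c x (Fin.cons p pts : Fin (n + 2) → X × Y) =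
      c (x, p.2) - c p + chainCost c p.1 pts := by
  simp only [chainCost, Fin.sum_univ_succ (n := n), Fin.cons_zero, Fin.castSucc_zero,
    ← Fin.succ_castSucc, Fin.cons_succ]

theorem chainCost_sub_chainCost {n : ℕ} (x x' : X) (pts : Fin (n + 1) → X × Y) :
    chainCost c x pts - chainCost c x' pts = c (x, (pts 0).2) - c (x', (pts 0).2) := by
  simp only [chainCost]
  ring

theorem CCyclicallyMonotone.chainCost_last_nonneg (h : CCyclicallyMonotone c Γ) {n : ℕ}
    (pts : Fin (n + 1) → X × Y) (hpts : ∀ i, pts i ∈ Γ) :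
    0 ≤ chainCost c (pts (Fin.last n)).1 pts := by
  have hcyc := h n pts hpts
  rw [Fin.sum_univ_succ, Fin.sum_univ_castSucc] at hcyc
  simp only [Fin.coeSucc_eq_succ, Fin.last_add_one] at hcyc
  simp only [chainCost, Finset.sum_sub_distrib]
  linarith

variable (c S) in
def chainCosts (x : X) : Set ℝ :=
  {r | ∃ (n : ℕ) (pts : Fin (n + 1) → X × Y), (∀ i, pts i ∈ S) ∧ chainCost c x pts = r}

variable (c S) in
noncomputable def chainPotential (x : X) : ℝ :=
  sInf (chainCosts c S x)

theorem CCyclicallyMonotone.bddBelow_chainCosts (h : CCyclicallyMonotone c S) (hS : S.Finite)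
    (x : X) : BddBelow (chainCosts c S x) := by
  obtain ⟨m, hm⟩ := ((hS.prod hS).image fun qq => c (x, qq.1.2) - c (qq.2.1, qq.1.2)).bddBelow
  refine ⟨m, ?_⟩
  rintro _ ⟨n, pts, hpts, rfl⟩
  have := hm ⟨(pts 0, pts (Fin.last n)), ⟨hpts 0, hpts _⟩, rfl⟩
  linarith [h.chainCost_last_nonneg pts hpts,
    chainCost_sub_chainCost (c := c) x (pts (Fin.last n)).1 pts]

theorem CCyclicallyMonotone.chainPotential_le (h : CCyclicallyMonotone c S) (hS : S.Finite)
    {p : X × Y} (hp : p ∈ S) (x : X) :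
    chainPotential c S x ≤ c (x, p.2) - c p + chainPotential c S p.1 := by
  rw [← sub_le_iff_le_add']
  refine le_csInf ⟨_, 0, fun _ => p, fun _ => hp, rfl⟩ ?_
  rintro _ ⟨n, pts, hpts, rfl⟩
  rw [sub_le_iff_le_add', ← chainCost_cons]
  refine csInf_le (h.bddBelow_chainCosts hS x) ⟨n + 1, Fin.cons p pts, ?_, rfl⟩
  exact Fin.cases hp hpts

theorem CCyclicallyMonotone.exists_potentials (h : CCyclicallyMonotone c S) (hS : S.Finite) :
    ∃ (φ : X → ℝ) (ψ : Y → ℝ), (∀ x, ∀ p ∈ S, φ x + ψ p.2 ≤ c (x, p.2)) ∧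
      ∀ p ∈ S, φ p.1 + ψ p.2 = c p := by
  set φ := chainPotential c S
  have hψ : ∀ y, ∃ b, ∀ p ∈ S, p.2 = y → c p - φ p.1 = b := by
    intro y
    by_cases hy : ∃ q ∈ S, q.2 = y
    · obtain ⟨q, hq, rfl⟩ := hy
      refine ⟨c q - φ q.1, fun p hp hpq => le_antisymm ?_ ?_⟩
      · have := h.chainPotential_le hS hp q.1
        rw [hpq] at this
        linarith
      · have := h.chainPotential_le hS hq p.1
        rw [← hpq] at this
        linarith
    · exact ⟨0, fun p hp hpy => (hy ⟨p, hp, hpy⟩).elim⟩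
  choose ψ hψ using hψ
  refine ⟨φ, ψ, fun x p hp => ?_, fun p hp => ?_⟩
  · have := h.chainPotential_le hS hp x
    linarith [hψ p.2 p hp rfl]
  · linarith [hψ p.2 p hp rfl]

end Potential

section FiniteSupport

variable {Z W E : Type*} [MeasurableSpace Z] [MeasurableSpace W] [NormedAddCommGroup E]

theorem integrable_of_ae_mem_finite [MeasurableSingletonClass Z] {μ : Measure Z}
    [IsFiniteMeasure μ] {F : Set Z} (hF : F.Finite) (hμ : ∀ᵐ z ∂μ, z ∈ F) (f : Z → E) :
    Integrable f μ := by
  rw [← Measure.restrict_eq_self_of_ae_mem hμ]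
  exact IntegrableOn.of_finite hF

theorem ae_mem_image_map {μ : Measure Z} {f : Z → W} (hf : Measurable f) {F : Set Z}
    (hF : F.Finite) [MeasurableSingletonClass W] (hμ : ∀ᵐ z ∂μ, z ∈ F) :
    ∀ᵐ w ∂μ.map f, w ∈ f '' F := by
  refine (ae_map_iff hf.aemeasurable (hF.image f).measurableSet).2 ?_
  exact hμ.mono fun z hz => Set.mem_image_of_mem f hz

theorem integral_comp_eq_of_map_eq [NormedSpace ℝ E] {μ ν : Measure Z} {f : Z → W}
    (hf : Measurable f) (hμν : ν.map f = μ.map f) {g : W → E}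
    (hg : AEStronglyMeasurable g (μ.map f)) :
    ∫ z, g (f z) ∂ν = ∫ z, g (f z) ∂μ := by
  rw [← integral_map hf.aemeasurable (hμν ▸ hg), hμν, integral_map hf.aemeasurable hg]

variable [MeasurableSingletonClass Z] {ι : Type*} [Fintype ι]

theorem ae_mem_range_sum_dirac (z : ι → Z) :
    ∀ᵐ x ∂(∑ i, Measure.dirac (z i)), x ∈ Set.range z := by
  simp [ae_iff]

theorem integral_sum_dirac_fintype [NormedSpace ℝ E] [CompleteSpace E] (z : ι → Z)
    (f : Z → E) :
    ∫ x, f x ∂(∑ i, Measure.dirac (z i)) = ∑ i, f (z i) := by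
  rw [integral_finsetSum_measure fun i _ => integrable_dirac enorm_lt_top]
  exact Finset.sum_congr rfl fun i _ => integral_dirac f (z i)

theorem map_sum_dirac [MeasurableSingletonClass W] {f : Z → W} (hf : Measurable f) (z : ι → Z) :
    (∑ i, Measure.dirac (z i)).map f = ∑ i, Measure.dirac (f (z i)) := by
  simp [← Measure.sum_fintype, Measure.map_sum hf.aemeasurable, Measure.map_dirac]

end FiniteSupport

theorem CCyclicallyMonotone.integral_le_of_map_eq {X Y : Type*} [MeasurableSpace X]
    [MeasurableSingletonClass X] [MeasurableSpace Y] [MeasurableSingletonClass Y]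
    {c : X × Y → ℝ} {Γ : Set (X × Y)} (h : CCyclicallyMonotone c Γ)
    {α α' : Measure (X × Y)} [IsFiniteMeasure α] [IsFiniteMeasure α'] {S S' : Set (X × Y)}
    (hS : S.Finite) (hSΓ : S ⊆ Γ) (hα : ∀ᵐ p ∂α, p ∈ S) (hS' : S'.Finite)
    (hα' : ∀ᵐ p ∂α', p ∈ S') (hfst : α'.map Prod.fst = α.map Prod.fst)
    (hsnd : α'.map Prod.snd = α.map Prod.snd) :
    ∫ p, c p ∂α ≤ ∫ p, c p ∂α' := by
  obtain ⟨φ, ψ, hle, heq⟩ := (h.mono hSΓ).exists_potentials hS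
  have hφ : ∫ p, φ p.1 ∂α' = ∫ p, φ p.1 ∂α :=
    integral_comp_eq_of_map_eq measurable_fst hfst <|
      (integrable_of_ae_mem_finite (hS.image _) (ae_mem_image_map measurable_fst hS hα) φ).1
  have hψ : ∫ p, ψ p.2 ∂α' = ∫ p, ψ p.2 ∂α :=
    integral_comp_eq_of_map_eq measurable_snd hsnd <|
      (integrable_of_ae_mem_finite (hS.image _) (ae_mem_image_map measurable_snd hS hα) ψ).1
  have hα'snd : ∀ᵐ p ∂α', p.2 ∈ Prod.snd '' S :=
    ae_of_ae_map measurable_snd.aemeasurable (hsnd ▸ ae_mem_image_map measurable_snd hS hα)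
  have hint := integrable_of_ae_mem_finite hS hα (E := ℝ)
  have hint' := integrable_of_ae_mem_finite hS' hα' (E := ℝ)
  calc ∫ p, c p ∂α = ∫ p, (φ p.1 + ψ p.2) ∂α :=
        integral_congr_ae (hα.mono fun p hp => (heq p hp).symm)
    _ = ∫ p, (φ p.1 + ψ p.2) ∂α' := by
        rw [integral_add (hint _) (hint _), integral_add (hint' _) (hint' _), hφ, hψ]
    _ ≤ ∫ p, c p ∂α' := by
        refine integral_mono_ae (hint' _) (hint' _) (hα'snd.mono ?_)
        rintro p ⟨q, hq, hqp⟩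
        simpa [hqp] using hle p.1 q hq

/-- **Lemma.** A set `Γ ⊆ X × Y` is `c`-cyclically monotone if and only if for every
finite measure `α` concentrated on finitely many points of `Γ`, every finite measure `α'`
concentrated on finitely many points which has the same total mass and the same two
marginals as `α` satisfies `∫ c dα ≤ ∫ c dα'`. -/
theorem statement12
    {X Y : Type*}
    [TopologicalSpace X] [PolishSpace X] [MeasurableSpace X] [BorelSpace X]
    [TopologicalSpace Y] [PolishSpace Y] [MeasurableSpace Y] [BorelSpace Y]
    (c : X × Y → ℝ) (Γ : Set (X × Y)) :
    CCyclicallyMonotone c Γ ↔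
      ∀ α α' : Measure (X × Y), IsFiniteMeasure α → IsFiniteMeasure α' →
        (∃ S : Finset (X × Y), ↑S ⊆ Γ ∧ α (↑S : Set (X × Y))ᶜ = 0) →
        (∃ S : Finset (X × Y), α' (↑S : Set (X × Y))ᶜ = 0) →
        α' Set.univ = α Set.univ →
        α'.map Prod.fst = α.map Prod.fst →
        α'.map Prod.snd = α.map Prod.snd →
        ∫ p, c p ∂α ≤ ∫ p, c p ∂α' := by
  refine ⟨fun h α α' _ _ ⟨S, hSΓ, hS⟩ ⟨S', hS'⟩ _ hfst hsnd =>
    h.integral_le_of_map_eq S.finite_toSet hSΓ (mem_ae_iff.2 hS) S'.finite_toSet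
      (mem_ae_iff.2 hS') hfst hsnd, fun h l pts hpts => ?_⟩
  set α := ∑ i, Measure.dirac (pts i)
  set α' := ∑ i, Measure.dirac ((pts i).1, (pts (i + 1)).2)
  have hfst : α'.map Prod.fst = α.map Prod.fst := by
    simp only [α, α', map_sum_dirac measurable_fst]
  have hsnd : α'.map Prod.snd = α.map Prod.snd := by
    simp only [α, α', map_sum_dirac measurable_snd]
    exact Equiv.sum_comp (Equiv.addRight 1) fun i => Measure.dirac (pts i).2
  have hα : ∃ S : Finset (X × Y), ↑S ⊆ Γ ∧ α (↑S : Set (X × Y))ᶜ = 0 :=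
    ⟨(Set.finite_range pts).toFinset, by simpa [Set.range_subset_iff] using hpts,
      by rw [Set.Finite.coe_toFinset]; exact mem_ae_iff.1 (ae_mem_range_sum_dirac pts)⟩
  have hα' : ∃ S : Finset (X × Y), α' (↑S : Set (X × Y))ᶜ = 0 :=
    ⟨(Set.finite_range _).toFinset, by
      rw [Set.Finite.coe_toFinset]; exact mem_ae_iff.1 (ae_mem_range_sum_dirac _)⟩
  have := h α α' inferInstance inferInstance hα hα' (by simp [α, α']) hfst hsnd
  simpa only [α, α', integral_sum_dirac_fintype] using this
end

section
/- Let h : ℝ → ℝ be strictly concave, let Γ ⊆ C[0,1] be a set that is finitely minimal for the cost functional c(f) = h(∫₀¹ f(t) dt) with respect to the family of marginal-constraint functions F₃ = {φ∘p_t − ∫ φ dμ_t : φ ∈ C_b(ℝ), t ∈ [0,1]} (where (μ_t) are the time-t marginals). Then Γ is monotone: for any f, g ∈ Γ, either f(t) ≤ g(t) for all t ∈ [0,1] or g(t) ≤ f(t) for all t ∈ [0,1]. Specifically, if f, g ∈ Γ are not pointwise comparable, then setting f′ = max{f, g}, g′ = min{f, g}, α = ½δ_f + ½δ_g and α′ =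 ½δ_{f′} + ½δ_{g′}, the measure α′ has the same marginals as α at every time t and satisfies ∫ c dα′ < ∫ c dα, i.e., α′ is a c-better competitor of α. -/
open MeasureTheory
open scoped ENNReal

noncomputable instance : MeasurableSpace C(Set.Icc (0:ℝ) 1, ℝ) := borel _
instance : BorelSpace C(Set.Icc (0:ℝ) 1, ℝ) := ⟨rfl⟩

/-- The cost `f ↦ h(∫₀¹ f(t) dt)` of a continuous path. -/
noncomputable def pathCost (h : ℝ → ℝ) (f : C(Set.Icc (0:ℝ) 1, ℝ)) : ℝ :=
  h (∫ t, f t ∂((volume : Measure ℝ).comap Subtype.val))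

/-- `Γ ⊆ C[0,1]` is finitely minimal for the cost `c` with respect to the marginal
constraints `F₃`: no finite measure concentrated on finitely many points of `Γ` admits a
`c`-better competitor (a finitely supported finite measure with the same total mass and
the same time-`t` marginal for every `t`). -/
def FinitelyMinimalPath (c : C(Set.Icc (0:ℝ) 1, ℝ) → ℝ)
    (Γ : Set C(Set.Icc (0:ℝ) 1, ℝ)) : Prop :=
  ∀ α α' : Measure C(Set.Icc (0:ℝ) 1, ℝ), IsFiniteMeasure α → IsFiniteMeasure α' →
    (∃ S : Finset C(Set.Icc (0:ℝ) 1, ℝ), ↑S ⊆ Γ ∧ α (↑S : Set C(Set.Icc (0:ℝ) 1, ℝ))ᶜ = 0) →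
    (∃ S : Finset C(Set.Icc (0:ℝ) 1, ℝ), α' (↑S : Set C(Set.Icc (0:ℝ) 1, ℝ))ᶜ = 0) →
    α' Set.univ = α Set.univ →
    (∀ t, α'.map (fun f => f t) = α.map (fun f => f t)) →
    ¬ (∫ f, c f ∂α' < ∫ f, c f ∂α)

namespace Statement13Aux

noncomputable def μ0 : Measure (Set.Icc (0:ℝ) 1) := (volume : Measure ℝ).comap Subtype.val

lemma hemb : MeasurableEmbedding (Subtype.val : Set.Icc (0:ℝ) 1 → ℝ) :=
  MeasurableEmbedding.subtype_coe measurableSet_Icc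

instance : IsFiniteMeasure μ0 := by
  constructor
  rw [μ0, hemb.comap_apply]
  have : (Subtype.val : Set.Icc (0:ℝ) 1 → ℝ) '' Set.univ = Set.Icc 0 1 := by
    rw [Set.image_univ, Subtype.range_coe]
  rw [this, Real.volume_Icc]
  simp

lemma integrable_cm (f : C(Set.Icc (0:ℝ) 1, ℝ)) : Integrable (fun t => f t) μ0 := by
  refine ⟨f.continuous.stronglyMeasurable.aestronglyMeasurable, ?_⟩
  exact HasFiniteIntegral.of_bounded (C := ‖f‖)
    (Filter.Eventually.of_forall fun x => f.norm_coe_le_norm x)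

lemma μ0_pos_of_open {U : Set (Set.Icc (0:ℝ) 1)} (hU : IsOpen U) {t : Set.Icc (0:ℝ) 1}
    (ht : t ∈ U) : 0 < μ0 U := by
  obtain ⟨V, hV, hVU⟩ := isOpen_induced_iff.mp hU
  have htV : (t : ℝ) ∈ V := by rw [← hVU] at ht; exact ht
  obtain ⟨ε, hε, hball⟩ := Metric.isOpen_iff.mp hV _ htV
  have hsub : Set.Ioo (max 0 ((t:ℝ) - ε)) (min 1 ((t:ℝ) + ε)) ⊆ V ∩ Set.Icc 0 1 := by
    rintro x ⟨hx1, hx2⟩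
    constructor
    · apply hball
      rw [Metric.mem_ball, Real.dist_eq, abs_lt]
      constructor <;> [linarith [le_max_right 0 ((t:ℝ) - ε)]; linarith [min_le_right 1 ((t:ℝ)+ε)]]
    · exact ⟨le_of_lt (lt_of_le_of_lt (le_max_left _ _) hx1),
        le_of_lt (lt_of_lt_of_le hx2 (min_le_left _ _))⟩
  have h1 : μ0 U = volume (Subtype.val '' U) := by rw [μ0, hemb.comap_apply]
  have h2 : Subtype.val '' U = V ∩ Set.Icc 0 1 := by
    rw [← hVU]
    ext x
    constructor
    · rintro ⟨y, hy, rfl⟩; exact ⟨hy, y.2⟩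
    · rintro ⟨hxV, hxI⟩; exact ⟨⟨x, hxI⟩, hxV, rfl⟩
  rw [h1, h2]
  have hne : max 0 ((t:ℝ) - ε) < min 1 ((t:ℝ) + ε) := by
    rcases t with ⟨tv, ht0, ht1⟩
    apply max_lt <;> apply lt_min <;> simp <;> linarith
  calc (0:ℝ≥0∞) < volume (Set.Ioo (max 0 ((t:ℝ) - ε)) (min 1 ((t:ℝ) + ε))) := by
        rw [Real.volume_Ioo]; simp [hne]
    _ ≤ _ := measure_mono hsub

lemma integral_lt_of_le_of_lt_at {f g : C(Set.Icc (0:ℝ) 1, ℝ)} (hle : ∀ t, f t ≤ g t)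
    {s : Set.Icc (0:ℝ) 1} (hs : f s < g s) :
    ∫ t, f t ∂μ0 < ∫ t, g t ∂μ0 := by
  have hint_f := integrable_cm f
  have hint_g := integrable_cm g
  have key : 0 < ∫ t, (g t - f t) ∂μ0 := by
    rw [integral_pos_iff_support_of_nonneg (fun t => sub_nonneg.mpr (hle t))
      (hint_g.sub hint_f)]
    have hopen : IsOpen (Function.support fun t => g t - f t) := by
      have : Function.support (fun t => g t - f t) = (fun t => g t - f t) ⁻¹' {0}ᶜ := by
        ext x; simp [Function.mem_support]
      rw [this]
      exact (isOpen_compl_singleton).preimage (g.continuous.sub f.continuous)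
    exact μ0_pos_of_open hopen (by simp [Function.mem_support]; linarith)
  have := integral_sub hint_g hint_f
  linarith [this ▸ key]

section gen
variable {X : Type*} [MeasurableSpace X] [MeasurableSingletonClass X]

instance halfDiracFin (a : X) : IsFiniteMeasure ((2⁻¹ : ℝ≥0∞) • Measure.dirac a) := by
  constructor
  simp [Measure.smul_apply]

lemma ae_eq_half_dirac (φ : X → ℝ) (a : X) :
    φ =ᵐ[(2⁻¹ : ℝ≥0∞) • Measure.dirac a] fun _ => φ a :=
  Measure.ae_smul_measure (ae_eq_dirac φ) _

lemma integrable_half_dirac (φ : X → ℝ) (a : X) :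
    Integrable φ ((2⁻¹ : ℝ≥0∞) • Measure.dirac a) :=
  (integrable_const (φ a)).congr (ae_eq_half_dirac φ a).symm

lemma integral_half_dirac (φ : X → ℝ) (a : X) :
    ∫ x, φ x ∂((2⁻¹ : ℝ≥0∞) • Measure.dirac a) = 2⁻¹ * φ a := by
  rw [integral_congr_ae (ae_eq_half_dirac φ a), integral_const]
  simp [Measure.smul_apply, ENNReal.toReal_inv]

lemma integral_two_dirac (φ : X → ℝ) (a b : X) :
    ∫ x, φ x ∂((2⁻¹ : ℝ≥0∞) • Measure.dirac a + (2⁻¹ : ℝ≥0∞) • Measure.dirac b)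
      = 2⁻¹ * φ a + 2⁻¹ * φ b := by
  rw [integral_add_measure (integrable_half_dirac φ a) (integrable_half_dirac φ b),
    integral_half_dirac, integral_half_dirac]

end gen

lemma concave_ineq {h : ℝ → ℝ} (hconc : StrictConcaveOn ℝ Set.univ h)
    {A B a b : ℝ} (hsum : a + b = A + B) (h1 : B < a) (h2 : a < A) :
    h A + h B < h a + h b := by
  set l : ℝ := (a - B) / (A - B) with hl
  have hAB : (0:ℝ) < A - B := by linarith
  have hl0 : 0 < l := div_pos (by linarith) hAB
  have hl1 : l < 1 := (div_lt_one hAB).mpr (by linarith)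
  have hANB : A ≠ B := by intro e; rw [e] at hAB; linarith
  have hlAB : l * (A - B) = a - B := by rw [hl]; field_simp
  have ha : l * A + (1 - l) * B = a := by nlinarith [hlAB]
  have hb : (1 - l) * A + l * B = b := by nlinarith [hlAB]
  have e1 := hconc.2 (Set.mem_univ A) (Set.mem_univ B) hANB hl0
    (show (0:ℝ) < 1 - l by linarith) (by ring)
  have e2 := hconc.2 (Set.mem_univ A) (Set.mem_univ B) hANB
    (show (0:ℝ) < 1 - l by linarith) hl0 (by ring)
  simp only [smul_eq_mul] at e1 e2
  rw [ha] at e1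
  rw [hb] at e2
  nlinarith [e1, e2]

lemma meas_eval (t : Set.Icc (0:ℝ) 1) :
    Measurable (fun u : C(Set.Icc (0:ℝ) 1, ℝ) => u t) :=
  (ContinuousEvalConst.continuous_eval_const t).measurable

/-- The key construction for non-comparable `f, g`. -/
lemma key (h : ℝ → ℝ) (hconc : StrictConcaveOn ℝ Set.univ h)
    (f g : C(Set.Icc (0:ℝ) 1, ℝ))
    (hnc : ¬ ((∀ t, f t ≤ g t) ∨ (∀ t, g t ≤ f t))) :
    (∀ t, ((2⁻¹ : ℝ≥0∞) • Measure.dirac (f ⊔ g)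
            + (2⁻¹ : ℝ≥0∞) • Measure.dirac (f ⊓ g)).map (fun u => u t)
        = ((2⁻¹ : ℝ≥0∞) • Measure.dirac f
            + (2⁻¹ : ℝ≥0∞) • Measure.dirac g).map (fun u => u t)) ∧
    ((2⁻¹ : ℝ≥0∞) • Measure.dirac (f ⊔ g) + (2⁻¹ : ℝ≥0∞) • Measure.dirac (f ⊓ g))
        Set.univ
      = ((2⁻¹ : ℝ≥0∞) • Measure.dirac f + (2⁻¹ : ℝ≥0∞) • Measure.dirac g) Set.univ ∧
    ∫ u, pathCost h u
        ∂((2⁻¹ : ℝ≥0∞) • Measure.dirac (f ⊔ g) + (2⁻¹ : ℝ≥0∞) • Measure.dirac (f ⊓ g))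
      < ∫ u, pathCost h u
        ∂((2⁻¹ : ℝ≥0∞) • Measure.dirac f + (2⁻¹ : ℝ≥0∞) • Measure.dirac g) := by
  push_neg at hnc
  obtain ⟨⟨s, hs⟩, ⟨r, hr⟩⟩ := hnc
  -- hs : g s < f s, hr : f r < g r
  refine ⟨?_, ?_, ?_⟩
  · intro t
    rw [Measure.map_add _ _ (meas_eval t), Measure.map_add _ _ (meas_eval t),
      Measure.map_smul, Measure.map_smul, Measure.map_smul, Measure.map_smul,
      Measure.map_dirac' (meas_eval t), Measure.map_dirac' (meas_eval t),
      Measure.map_dirac' (meas_eval t), Measure.map_dirac' (meas_eval t)]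
    rcases le_total (f t) (g t) with hle | hle
    · have e1 : (f ⊔ g) t = g t := by
        simp [ContinuousMap.sup_apply, sup_eq_right.mpr hle]
      have e2 : (f ⊓ g) t = f t := by
        simp [ContinuousMap.inf_apply, inf_eq_left.mpr hle]
      rw [e1, e2, add_comm]
    · have e1 : (f ⊔ g) t = f t := by
        simp [ContinuousMap.sup_apply, sup_eq_left.mpr hle]
      have e2 : (f ⊓ g) t = g t := by
        simp [ContinuousMap.inf_apply, inf_eq_right.mpr hle]
      rw [e1, e2]
  · simp only [Measure.coe_add, Pi.add_apply, Measure.smul_apply, smul_eq_mul, measure_univ]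
  · rw [integral_two_dirac, integral_two_dirac]
    have hIsum : (∫ t, (f ⊔ g) t ∂μ0) + (∫ t, (f ⊓ g) t ∂μ0)
        = (∫ t, f t ∂μ0) + (∫ t, g t ∂μ0) := by
      rw [← integral_add (integrable_cm (f ⊔ g)) (integrable_cm (f ⊓ g)),
        ← integral_add (integrable_cm f) (integrable_cm g)]
      apply integral_congr_ae
      apply Filter.Eventually.of_forall
      intro t
      simp only [ContinuousMap.sup_apply, ContinuousMap.inf_apply]
      exact max_add_min (f t) (g t)
    have hA : (∫ t, f t ∂μ0) < ∫ t, (f ⊔ g) t ∂μ0 := by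
      apply integral_lt_of_le_of_lt_at (f := f) (g := f ⊔ g)
        (fun t => by simp [ContinuousMap.sup_apply, le_max_left]) (s := r)
      simp only [ContinuousMap.sup_apply]
      exact lt_max_of_lt_right hr
    have hB : (∫ t, (f ⊓ g) t ∂μ0) < ∫ t, f t ∂μ0 := by
      apply integral_lt_of_le_of_lt_at (f := f ⊓ g) (g := f)
        (fun t => by simp [ContinuousMap.inf_apply, min_le_left]) (s := s)
      simp only [ContinuousMap.inf_apply]
      exact min_lt_of_right_lt hs
    have hmain := concave_ineq hconc
      (A := ∫ t, (f ⊔ g) t ∂μ0) (B := ∫ t, (f ⊓ g) t ∂μ0)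
      (a := ∫ t, f t ∂μ0) (b := ∫ t, g t ∂μ0) hIsum.symm hB hA
    have c1 : pathCost h (f ⊔ g) = h (∫ t, (f ⊔ g) t ∂μ0) := rfl
    have c2 : pathCost h (f ⊓ g) = h (∫ t, (f ⊓ g) t ∂μ0) := rfl
    have c3 : pathCost h f = h (∫ t, f t ∂μ0) := rfl
    have c4 : pathCost h g = h (∫ t, g t ∂μ0) := rfl
    rw [c1, c2, c3, c4]
    linarith

end Statement13Aux

/-- **Lemma.** If `h : ℝ → ℝ` is strictly concave and `Γ ⊆ C[0,1]` is finitely minimal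
for the cost `c(f) = h(∫₀¹ f)` with respect to the marginal constraints, then `Γ` is
monotone. Specifically, for non-comparable `f, g ∈ Γ`, the measure
`α' = ½δ_{f⊔g} + ½δ_{f⊓g}` has the same time-`t` marginals and the same mass as
`α = ½δ_f + ½δ_g` and strictly smaller cost, i.e. `α'` is a `c`-better competitor. -/
theorem statement13
    (h : ℝ → ℝ) (hconc : StrictConcaveOn ℝ Set.univ h)
    (Γ : Set C(Set.Icc (0:ℝ) 1, ℝ))
    (hΓ : FinitelyMinimalPath (pathCost h) Γ) :
    (∀ f ∈ Γ, ∀ g ∈ Γ, (∀ t, f t ≤ g t) ∨ (∀ t, g t ≤ f t)) ∧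
    (∀ f ∈ Γ, ∀ g ∈ Γ,
      ¬ ((∀ t, f t ≤ g t) ∨ (∀ t, g t ≤ f t)) →
      (∀ t, ((2⁻¹ : ℝ≥0∞) • Measure.dirac (f ⊔ g)
              + (2⁻¹ : ℝ≥0∞) • Measure.dirac (f ⊓ g)).map (fun u => u t)
          = ((2⁻¹ : ℝ≥0∞) • Measure.dirac f
              + (2⁻¹ : ℝ≥0∞) • Measure.dirac g).map (fun u => u t)) ∧
      ((2⁻¹ : ℝ≥0∞) • Measure.dirac (f ⊔ g) + (2⁻¹ : ℝ≥0∞) • Measure.dirac (f ⊓ g))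
          Set.univ
        = ((2⁻¹ : ℝ≥0∞) • Measure.dirac f + (2⁻¹ : ℝ≥0∞) • Measure.dirac g) Set.univ ∧
      ∫ u, pathCost h u
          ∂((2⁻¹ : ℝ≥0∞) • Measure.dirac (f ⊔ g) + (2⁻¹ : ℝ≥0∞) • Measure.dirac (f ⊓ g))
        < ∫ u, pathCost h u
          ∂((2⁻¹ : ℝ≥0∞) • Measure.dirac f + (2⁻¹ : ℝ≥0∞) • Measure.dirac g)) := by
  classical
  constructor
  · intro f hf g hg
    by_contra hnc
    obtain ⟨hmarg, hmass, hcost⟩ := Statement13Aux.key h hconc f g hnc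
    exact hΓ ((2⁻¹ : ℝ≥0∞) • Measure.dirac f + (2⁻¹ : ℝ≥0∞) • Measure.dirac g)
      ((2⁻¹ : ℝ≥0∞) • Measure.dirac (f ⊔ g) + (2⁻¹ : ℝ≥0∞) • Measure.dirac (f ⊓ g))
      inferInstance inferInstance
      ⟨{f, g}, by simp [Set.insert_subset_iff, hf, hg],
        by simp [Measure.dirac_apply, Set.indicator]⟩
      ⟨{f ⊔ g, f ⊓ g}, by simp [Measure.dirac_apply, Set.indicator]⟩
      hmass hmarg hcost
  · intro f _ g _ hnc
    exact Statement13Aux.key h hconc f g hnc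
end

section
/- Let h : ℝ → ℝ be strictly concave and let Γ ⊆ ℝⁿ be a set that is finitely minimal for the cost c(x) = h(x₁ + ⋯ + x_n) with respect to the marginal constraints of the multi-marginal transport problem with marginals μ₁, …, μ_n. Then Γ is monotone: for any x, y ∈ Γ, either x_i ≤ y_i for all i or y_i ≤ x_i for all i. Specifically, if x, y ∈ Γ are not coordinatewise comparable, then the measure α′ = ½δ_{max{x,y}} + ½δ_{min{x,y}} (coordinatewise max and min) has the same coordinate marginals as α = ½δ_x + ½δ_y and satisfies ∫ c dα′ < ∫ c dα. -/
open MeasureTheory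
open scoped ENNReal

/-- `Γ ⊆ ℝⁿ` is finitely minimal for the cost `c` with respect to the multi-marginal
constraints: no finite measure concentrated on finitely many points of `Γ` admits a
`c`-better competitor (a finitely supported finite measure with the same total mass and
the same `i`-th coordinate marginal for every `i`). -/
def FinitelyMinimalMulti {n : ℕ} (c : (Fin n → ℝ) → ℝ) (Γ : Set (Fin n → ℝ)) : Prop :=
  ∀ α α' : Measure (Fin n → ℝ), IsFiniteMeasure α → IsFiniteMeasure α' →
    (∃ S : Finset (Fin n → ℝ), ↑S ⊆ Γ ∧ α (↑S : Set (Fin n → ℝ))ᶜ = 0) →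
    (∃ S : Finset (Fin n → ℝ), α' (↑S : Set (Fin n → ℝ))ᶜ = 0) →
    α' Set.univ = α Set.univ →
    (∀ i, α'.map (fun z => z i) = α.map (fun z => z i)) →
    ¬ (∫ z, c z ∂α' < ∫ z, c z ∂α)

/-!
If `x, y ∈ Γ` are incomparable, replacing `½δ_x + ½δ_y` by `½δ_{x⊔y} + ½δ_{x⊓y}` keeps every
coordinate marginal, since coordinatewise `{(x⊔y)ᵢ, (x⊓y)ᵢ} = {xᵢ, yᵢ}`. The coordinate sums
satisfy `s(x⊓y) < s(x), s(y) < s(x⊔y)` with `s(x) + s(y) = s(x⊓y) + s(x⊔y)`, so strict concavity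
of `h` makes the new cost strictly smaller, contradicting finite minimality.
-/

theorem StrictConcaveOn.add_lt_add_of_lt_of_lt_of_add_eq {s : Set ℝ} {f : ℝ → ℝ}
    (hf : StrictConcaveOn ℝ s f) {m a b M : ℝ} (hm : m ∈ s) (hM : M ∈ s)
    (hma : m < a) (haM : a < M) (hab : a + b = m + M) :
    f m + f M < f a + f b := by
  have hmM : 0 < M - m := by linarith
  set t := (a - m) / (M - m) with ht_def
  have ht : 0 < t := div_pos (by linarith) hmM
  have ht' : 0 < 1 - t := by
    rw [one_sub_div hmM.ne']
    exact div_pos (by linarith) hmM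
  -- `a` and `b` are the convex combinations of `m` and `M` with swapped weights
  have ha : (1 - t) • m + t • M = a := by
    simp only [smul_eq_mul, ht_def]
    field_simp
    ring
  have hb : t • m + (1 - t) • M = b := by
    simp only [smul_eq_mul, ht_def]
    field_simp
    linear_combination (m - M) * hab
  have h₁ := hf.2 hm hM (by linarith) ht' ht (by ring)
  have h₂ := hf.2 hm hM (by linarith) ht ht' (by ring)
  rw [ha] at h₁
  rw [hb] at h₂
  simp only [smul_eq_mul] at h₁ h₂
  linear_combination h₁ + h₂

section halfDirac

variable {α β : Type*} [MeasurableSpace α] [MeasurableSpace β]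

noncomputable def halfDirac (a b : α) : Measure α :=
  (2⁻¹ : ℝ≥0∞) • Measure.dirac a + (2⁻¹ : ℝ≥0∞) • Measure.dirac b

instance (a b : α) : IsProbabilityMeasure (halfDirac a b) :=
  ⟨by simp [halfDirac, ENNReal.inv_two_add_inv_two]⟩

theorem halfDirac_comm (a b : α) : halfDirac a b = halfDirac b a :=
  add_comm _ _

theorem halfDirac_sup_inf [LinearOrder α] (a b : α) :
    halfDirac (a ⊔ b) (a ⊓ b) = halfDirac a b := by
  rcases le_total a b with hab | hba
  · rw [sup_eq_right.2 hab, inf_eq_left.2 hab, halfDirac_comm]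
  · rw [sup_eq_left.2 hba, inf_eq_right.2 hba]

theorem map_halfDirac {f : α → β} (hf : Measurable f) (a b : α) :
    (halfDirac a b).map f = halfDirac (f a) (f b) := by
  simp only [halfDirac, Measure.map_add _ _ hf, Measure.map_smul, Measure.map_dirac' hf]

theorem halfDirac_compl_eq_zero [MeasurableSingletonClass α] {a b : α} {s : Set α}
    (ha : a ∈ s) (hb : b ∈ s) : halfDirac a b sᶜ = 0 := by
  simp [halfDirac, ha, hb]

theorem integral_halfDirac [MeasurableSingletonClass α] (f : α → ℝ) (a b : α) :
    ∫ z, f z ∂halfDirac a b = 2⁻¹ * f a + 2⁻¹ * f b := by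
  rw [halfDirac, integral_add_measure, integral_smul_measure, integral_smul_measure,
    integral_dirac, integral_dirac]
  · simp
  all_goals exact (integrable_dirac enorm_lt_top).smul_measure (by simp)

end halfDirac

theorem map_eval_halfDirac_sup_inf {ι : Type*} {β : ι → Type*} [∀ i, MeasurableSpace (β i)]
    [∀ i, LinearOrder (β i)] (x y : ∀ i, β i) (i : ι) :
    (halfDirac (x ⊔ y) (x ⊓ y)).map (fun z => z i) = (halfDirac x y).map (fun z => z i) := by
  rw [map_halfDirac (measurable_pi_apply i), map_halfDirac (measurable_pi_apply i)]
  exact halfDirac_sup_inf (x i) (y i)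

theorem integral_halfDirac_sup_inf_lt {ι : Type*} [Fintype ι] {f : ℝ → ℝ}
    (hf : StrictConcaveOn ℝ Set.univ f) {x y : ι → ℝ} (hxy : ¬ (x ≤ y ∨ y ≤ x)) :
    ∫ z, f (∑ i, z i) ∂halfDirac (x ⊔ y) (x ⊓ y) < ∫ z, f (∑ i, z i) ∂halfDirac x y := by
  obtain ⟨hnxy, hnyx⟩ := not_or.1 hxy
  have h_inf : ∑ i, (x ⊓ y) i < ∑ i, x i := Fintype.sum_strictMono (inf_lt_left.2 hnxy)
  have h_sup : ∑ i, x i < ∑ i, (x ⊔ y) i := Fintype.sum_strictMono (left_lt_sup.2 hnyx)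
  have h_add : ∑ i, x i + ∑ i, y i = ∑ i, (x ⊓ y) i + ∑ i, (x ⊔ y) i := by
    rw [← Finset.sum_add_distrib, ← Finset.sum_add_distrib]
    exact Finset.sum_congr rfl fun i _ => (inf_add_sup (x i) (y i)).symm
  have := hf.add_lt_add_of_lt_of_lt_of_add_eq trivial trivial h_inf h_sup h_add
  rw [integral_halfDirac, integral_halfDirac]
  linarith

/-- **Lemma.** If `h : ℝ → ℝ` is strictly concave and `Γ ⊆ ℝⁿ` is finitely minimal for
the cost `c(x) = h(x₁ + ⋯ + x_n)` with respect to the multi-marginal constraints, then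
`Γ` is monotone. Specifically, for coordinatewise non-comparable `x, y ∈ Γ`, the measure
`α' = ½δ_{x⊔y} + ½δ_{x⊓y}` has the same coordinate marginals as `α = ½δ_x + ½δ_y` and
strictly smaller cost. -/
theorem statement14
    {n : ℕ} (h : ℝ → ℝ) (hconc : StrictConcaveOn ℝ Set.univ h)
    (Γ : Set (Fin n → ℝ))
    (hΓ : FinitelyMinimalMulti (fun z => h (∑ i, z i)) Γ) :
    (∀ x ∈ Γ, ∀ y ∈ Γ, x ≤ y ∨ y ≤ x) ∧
    (∀ x ∈ Γ, ∀ y ∈ Γ, ¬ (x ≤ y ∨ y ≤ x) →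
      (∀ i, ((2⁻¹ : ℝ≥0∞) • Measure.dirac (x ⊔ y)
              + (2⁻¹ : ℝ≥0∞) • Measure.dirac (x ⊓ y)).map (fun z => z i)
          = ((2⁻¹ : ℝ≥0∞) • Measure.dirac x
              + (2⁻¹ : ℝ≥0∞) • Measure.dirac y).map (fun z => z i)) ∧
      ∫ z, h (∑ i, z i)
          ∂((2⁻¹ : ℝ≥0∞) • Measure.dirac (x ⊔ y) + (2⁻¹ : ℝ≥0∞) • Measure.dirac (x ⊓ y))
        < ∫ z, h (∑ i, z i)
          ∂((2⁻¹ : ℝ≥0∞) • Measure.dirac x + (2⁻¹ : ℝ≥0∞) • Measure.dirac y)) := by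
  have sup_inf_better (x y : Fin n → ℝ) (hxy : ¬ (x ≤ y ∨ y ≤ x)) :
      (∀ i, (halfDirac (x ⊔ y) (x ⊓ y)).map (fun z => z i) = (halfDirac x y).map (fun z => z i))
        ∧ ∫ z, h (∑ i, z i) ∂halfDirac (x ⊔ y) (x ⊓ y) < ∫ z, h (∑ i, z i) ∂halfDirac x y :=
    ⟨map_eval_halfDirac_sup_inf x y, integral_halfDirac_sup_inf_lt hconc hxy⟩
  refine ⟨fun x hx y hy => ?_, fun x _ y _ => sup_inf_better x y⟩
  by_contra hxy
  obtain ⟨h_marginals, h_cost⟩ := sup_inf_better x y hxy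
  exact hΓ (halfDirac x y) (halfDirac (x ⊔ y) (x ⊓ y)) inferInstance inferInstance
    ⟨{x, y}, by simp [Set.insert_subset_iff, hx, hy], halfDirac_compl_eq_zero (by simp) (by simp)⟩
    ⟨{x ⊔ y, x ⊓ y}, halfDirac_compl_eq_zero (by simp) (by simp)⟩
    (by simp only [measure_univ]) h_marginals h_cost
end

section
/- Every concave non-positive function h : ℝ → ℝ can be written as h = h₁ + h₂ where h₁ : ℝ → ℝ is concave, non-decreasing and non-positive, and h₂ : ℝ → ℝ is concave, non-increasing and non-positive. -/
/-- **Lemma.** Every concave non-positive function `h : ℝ → ℝ` can be written as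
`h = h₁ + h₂` with `h₁` concave, non-decreasing and non-positive and `h₂` concave,
non-increasing and non-positive. -/
theorem statement17 (h : ℝ → ℝ) (hconc : ConcaveOn ℝ Set.univ h)
    (hnonpos : ∀ x, h x ≤ 0) :
    ∃ h₁ h₂ : ℝ → ℝ,
      h = h₁ + h₂ ∧
      ConcaveOn ℝ Set.univ h₁ ∧ Monotone h₁ ∧ (∀ x, h₁ x ≤ 0) ∧
      ConcaveOn ℝ Set.univ h₂ ∧ Antitone h₂ ∧ (∀ x, h₂ x ≤ 0) := by
  have hzero : ConcaveOn ℝ Set.univ (0 : ℝ → ℝ) := by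
    simpa [Pi.zero_def] using concaveOn_const (0 : ℝ) convex_univ
  by_cases hmono : Monotone h
  · exact ⟨h, 0, by simp, hconc, hmono, hnonpos, hzero, antitone_const, by simp⟩
  by_cases hanti : Antitone h
  · exact ⟨0, h, by simp, hzero, monotone_const, by simp, hconc, hanti, hnonpos⟩
  rw [Monotone] at hmono; push_neg at hmono
  obtain ⟨a, b, hab, hba⟩ := hmono
  rw [Antitone] at hanti; push_neg at hanti
  obtain ⟨c, d, hcd, hdc⟩ := hanti
  have hcd' : c < d := lt_of_le_of_ne hcd (by rintro rfl; exact lt_irrefl _ hdc)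
  have hab' : a < b := lt_of_le_of_ne hab (by rintro rfl; exact lt_irrefl _ hba)
  have hcont : ContinuousOn h (Set.Icc (min a c) (max b d)) :=
    (hconc.continuousOn isOpen_univ).mono (Set.subset_univ _)
  have hlohi : min a c ≤ max b d :=
    le_trans (min_le_left _ _) (le_trans hab (le_max_left _ _))
  obtain ⟨m, hmI, hmax⟩ := isCompact_Icc.exists_isMaxOn (Set.nonempty_Icc.2 hlohi) hcont
  have hm : ∀ x, h x ≤ h m := by
    intro x
    rcases lt_or_ge x (min a c) with hx | hx
    · have hxc : x ≤ c := le_of_lt (lt_of_lt_of_le hx (min_le_right _ _))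
      have h1 : h x ≤ h c :=
        hconc.left_le_of_le_right'' (Set.mem_univ _) (Set.mem_univ _) hxc hcd' hdc.le
      exact h1.trans (hmax ⟨min_le_right _ _, hcd.trans (le_max_right _ _)⟩)
    rcases le_or_gt x (max b d) with hx' | hx'
    · exact hmax ⟨hx, hx'⟩
    · have hbx : b ≤ x := le_of_lt (lt_of_le_of_lt (le_max_left _ _) hx')
      have h1 : h x ≤ h b :=
        hconc.right_le_of_le_left'' (Set.mem_univ _) (Set.mem_univ _) hab' hbx hba.le
      exact h1.trans (hmax ⟨(min_le_left _ _).trans hab, le_max_left _ _⟩)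
  -- monotone to the left of m, antitone to the right
  have hmono1 : ∀ u v : ℝ, u ≤ v → v ≤ m → h u ≤ h v := by
    intro u v huv hvm
    rcases lt_or_eq_of_le hvm with hvm' | rfl
    · exact hconc.left_le_of_le_right'' (Set.mem_univ _) (Set.mem_univ _) huv hvm' (hm v)
    · exact hm u
  have hanti2 : ∀ u v : ℝ, m ≤ u → u ≤ v → h v ≤ h u := by
    intro u v hmu huv
    rcases lt_or_eq_of_le hmu with hmu' | rfl
    · exact hconc.right_le_of_le_left'' (Set.mem_univ _) (Set.mem_univ _) hmu' huv (hm u)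
    · exact hm v
  refine ⟨fun x => h (min x m), fun x => h (max x m) - h m, ?_, ?_, ?_, ?_, ?_, ?_, ?_⟩
  · funext x
    rcases le_total x m with hxm | hxm <;>
      simp [min_eq_left, min_eq_right, max_eq_left, max_eq_right, hxm]
  · refine ⟨convex_univ, ?_⟩
    intro x _ y _ p q hp hq hpq
    simp only [smul_eq_mul]
    set z := p * min x m + q * min y m with hz
    have hpm : p * m + q * m = m := by linear_combination m * hpq
    have hzm : z ≤ m := by
      have := mul_le_mul_of_nonneg_left (min_le_right x m) hp
      have := mul_le_mul_of_nonneg_left (min_le_right y m) hq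
      linarith
    have hzxy : z ≤ p * x + q * y := by
      have := mul_le_mul_of_nonneg_left (min_le_left x m) hp
      have := mul_le_mul_of_nonneg_left (min_le_left y m) hq
      nlinarith
    have h1 : h z ≤ h (min (p * x + q * y) m) :=
      hmono1 z _ (le_min hzxy hzm) (min_le_right _ _)
    have h2 : p * h (min x m) + q * h (min y m) ≤ h z := by
      simpa using hconc.2 (Set.mem_univ (min x m)) (Set.mem_univ (min y m)) hp hq hpq
    linarith
  · intro u v huv
    exact hmono1 _ _ (min_le_min huv le_rfl) (min_le_right _ _)
  · intro x; exact (hnonpos _)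
  · refine ⟨convex_univ, ?_⟩
    intro x _ y _ p q hp hq hpq
    simp only [smul_eq_mul]
    set w := p * max x m + q * max y m with hw
    have hpm : p * m + q * m = m := by linear_combination m * hpq
    have hpm' : p * h m + q * h m = h m := by linear_combination (h m) * hpq
    have hmw : m ≤ w := by
      have := mul_le_mul_of_nonneg_left (le_max_right x m) hp
      have := mul_le_mul_of_nonneg_left (le_max_right y m) hq
      linarith
    have hxyw : p * x + q * y ≤ w := by
      have := mul_le_mul_of_nonneg_left (le_max_left x m) hp
      have := mul_le_mul_of_nonneg_left (le_max_left y m) hq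
      nlinarith
    have h1 : h w ≤ h (max (p * x + q * y) m) :=
      hanti2 _ w (le_max_right _ _) (max_le hxyw hmw)
    have h2 : p * h (max x m) + q * h (max y m) ≤ h w := by
      simpa using hconc.2 (Set.mem_univ (max x m)) (Set.mem_univ (max y m)) hp hq hpq
    linarith
  · intro u v huv
    have := hanti2 (max u m) (max v m) (le_max_right _ _) (max_le_max huv le_rfl)
    simpa using sub_le_sub_right this (h m)
  · intro x; have := hm (max x m); simpa using this
end

section
/- Let E be a Polish space, c : E → ℝ Borel measurable with |c| ≤ g, and F a family of Borel measurable functions on E such that every f ∈ F satisfies |f| ≤ a_f · g for some constant a_f, and such that either all members of F are continuous or F is countable. Fix l ∈ ℕ and define M̂ as the set of tuples (z₁,…,z_l, α₁,…,α_l, z′₁,…,z′_l, α′₁,…,α′_l) ∈ E^l × ℝ₊^l × E^l × ℝ₊^l satisfying Σα_i ≤ 1, Σα_i g(z_i) ≤ l, Σα′_i ≤ 1, Σα′_i g(z′_i) ≤ l, Σα_i = Σα′_i, Σα_i f(z_i) = Σα′_i f(z′_i) for all f ∈ F, and Σα_i c(z_i) > Σα′_i c(z′_i). Then M̂ is a Borel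 subset of E^l × ℝ₊^l × E^l × ℝ₊^l, and its projection M onto the first l coordinates (z₁,…,z_l) is an analytic subset of E^l. -/
open MeasureTheory

/-- The set `M̂` of pairs of weighted configurations
`(z₁,…,z_l, α₁,…,α_l, z′₁,…,z′_l, α′₁,…,α′_l)` such that the primed configuration is a
`c`-better competitor of the unprimed one, with masses at most `1` and `g`-moments at
most `l`. -/
def Mhat {E : Type*} (c g : E → ℝ) (F : Set (E → ℝ)) (l : ℕ) :
    Set ((Fin l → E) × (Fin l → ℝ) × (Fin l → E) × (Fin l → ℝ)) :=
  {x | (∀ i, 0 ≤ x.2.1 i) ∧ (∀ i, 0 ≤ x.2.2.2 i) ∧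
       (∑ i, x.2.1 i) ≤ 1 ∧ (∑ i, x.2.1 i * g (x.1 i)) ≤ (l : ℝ) ∧
       (∑ i, x.2.2.2 i) ≤ 1 ∧ (∑ i, x.2.2.2 i * g (x.2.2.1 i)) ≤ (l : ℝ) ∧
       (∑ i, x.2.1 i) = (∑ i, x.2.2.2 i) ∧
       (∀ f ∈ F, (∑ i, x.2.1 i * f (x.1 i)) = (∑ i, x.2.2.2 i * f (x.2.2.1 i))) ∧
       (∑ i, x.2.2.2 i * c (x.2.2.1 i)) < (∑ i, x.2.1 i * c (x.1 i))}

section Aux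

variable {E : Type*} [TopologicalSpace E] [PolishSpace E] [MeasurableSpace E] [BorelSpace E]
  {l : ℕ}

private lemma meas_sum1 (f : E → ℝ) (hf : Measurable f) :
    Measurable (fun x : (Fin l → E) × (Fin l → ℝ) × (Fin l → E) × (Fin l → ℝ) =>
      ∑ i, x.2.1 i * f (x.1 i)) := by
  apply Finset.measurable_sum
  intro i _
  exact Measurable.mul ((measurable_pi_apply i).comp measurable_snd.fst)
    (hf.comp ((measurable_pi_apply i).comp measurable_fst))

private lemma meas_sum2 (f : E → ℝ) (hf : Measurable f) :
    Measurable (fun x : (Fin l → E) × (Fin l → ℝ) × (Fin l → E) × (Fin l → ℝ) =>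
      ∑ i, x.2.2.2 i * f (x.2.2.1 i)) := by
  apply Finset.measurable_sum
  intro i _
  exact Measurable.mul ((measurable_pi_apply i).comp measurable_snd.snd.snd)
    (hf.comp ((measurable_pi_apply i).comp measurable_snd.snd.fst))

private lemma cont_sum1 (f : E → ℝ) (hf : Continuous f) :
    Continuous (fun x : (Fin l → E) × (Fin l → ℝ) × (Fin l → E) × (Fin l → ℝ) =>
      ∑ i, x.2.1 i * f (x.1 i)) := by
  apply continuous_finset_sum
  intro i _
  exact Continuous.mul ((continuous_apply i).comp (continuous_fst.comp continuous_snd))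
    (hf.comp ((continuous_apply i).comp continuous_fst))

private lemma cont_sum2 (f : E → ℝ) (hf : Continuous f) :
    Continuous (fun x : (Fin l → E) × (Fin l → ℝ) × (Fin l → E) × (Fin l → ℝ) =>
      ∑ i, x.2.2.2 i * f (x.2.2.1 i)) := by
  apply continuous_finset_sum
  intro i _
  exact Continuous.mul
    ((continuous_apply i).comp (continuous_snd.comp (continuous_snd.comp continuous_snd)))
    (hf.comp ((continuous_apply i).comp (continuous_fst.comp (continuous_snd.comp continuous_snd))))

end Aux

/-- **Lemma.** Under the standing assumptions on `c`, `g` and `F`, the set `M̂` is Borel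
and its projection `M` onto the first `l` coordinates is an analytic subset of `E^l`. -/
theorem statement19
    {E : Type*} [TopologicalSpace E] [PolishSpace E] [MeasurableSpace E] [BorelSpace E]
    (c : E → ℝ) (hc : Measurable c)
    (g : E → ℝ) (hgmeas : Measurable g) (hg : ∀ x, 0 ≤ g x)
    (hcg : ∀ x, |c x| ≤ g x)
    (F : Set (E → ℝ)) (hFmeas : ∀ f ∈ F, Measurable f)
    (hdom : ∀ f ∈ F, ∃ a : ℝ, 0 ≤ a ∧ ∀ x, |f x| ≤ a * g x)
    (hFcc : (∀ f ∈ F, Continuous f) ∨ F.Countable)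
    (l : ℕ) :
    MeasurableSet (Mhat c g F l) ∧
    MeasureTheory.AnalyticSet
      {z : Fin l → E | ∃ a z' a', (z, a, z', a') ∈ Mhat c g F l} := by
  set X := (Fin l → E) × (Fin l → ℝ) × (Fin l → E) × (Fin l → ℝ)
  -- measurability of the "middle" condition
  have hB : MeasurableSet {x : X |
      ∀ f ∈ F, (∑ i, x.2.1 i * f (x.1 i)) = (∑ i, x.2.2.2 i * f (x.2.2.1 i))} := by
    have heq : {x : X |
        ∀ f ∈ F, (∑ i, x.2.1 i * f (x.1 i)) = (∑ i, x.2.2.2 i * f (x.2.2.1 i))}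
        = ⋂ f ∈ F, {x : X | (∑ i, x.2.1 i * f (x.1 i)) = (∑ i, x.2.2.2 i * f (x.2.2.1 i))} := by
      ext x; simp [Set.mem_iInter]
    rw [heq]
    rcases hFcc with hcont | hcount
    · refine IsClosed.measurableSet ?_
      refine isClosed_biInter fun f hf => ?_
      exact isClosed_eq (cont_sum1 f (hcont f hf)) (cont_sum2 f (hcont f hf))
    · refine MeasurableSet.biInter hcount fun f hf => ?_
      exact measurableSet_eq_fun (meas_sum1 f (hFmeas f hf)) (meas_sum2 f (hFmeas f hf))
  have hM : MeasurableSet (Mhat c g F l) := by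
    have heq : Mhat c g F l =
        ({x : X | ∀ i, 0 ≤ x.2.1 i} ∩ {x : X | ∀ i, 0 ≤ x.2.2.2 i} ∩
         {x : X | (∑ i, x.2.1 i) ≤ 1} ∩ {x : X | (∑ i, x.2.1 i * g (x.1 i)) ≤ (l : ℝ)} ∩
         {x : X | (∑ i, x.2.2.2 i) ≤ 1} ∩
         {x : X | (∑ i, x.2.2.2 i * g (x.2.2.1 i)) ≤ (l : ℝ)} ∩
         {x : X | (∑ i, x.2.1 i) = (∑ i, x.2.2.2 i)} ∩
         {x : X | ∀ f ∈ F, (∑ i, x.2.1 i * f (x.1 i)) = (∑ i, x.2.2.2 i * f (x.2.2.1 i))} ∩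
         {x : X | (∑ i, x.2.2.2 i * c (x.2.2.1 i)) < (∑ i, x.2.1 i * c (x.1 i))}) := by
      ext x
      simp only [Mhat, Set.mem_setOf_eq, Set.mem_inter_iff]
      tauto
    rw [heq]
    have hs1 : Measurable (fun x : X => ∑ i, x.2.1 i) := by
      apply Finset.measurable_sum
      exact fun i _ => (measurable_pi_apply i).comp measurable_snd.fst
    have hs2 : Measurable (fun x : X => ∑ i, x.2.2.2 i) := by
      apply Finset.measurable_sum
      exact fun i _ => (measurable_pi_apply i).comp measurable_snd.snd.snd
    refine MeasurableSet.inter (MeasurableSet.inter (MeasurableSet.inter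
      (MeasurableSet.inter (MeasurableSet.inter (MeasurableSet.inter
      (MeasurableSet.inter (MeasurableSet.inter ?_ ?_) ?_) ?_) ?_) ?_) ?_) hB) ?_
    · have : {x : X | ∀ i, 0 ≤ x.2.1 i} = ⋂ i, {x : X | 0 ≤ x.2.1 i} := by ext; simp
      rw [this]
      refine MeasurableSet.iInter fun i => ?_
      exact measurableSet_le measurable_const measurable_snd.fst.eval
    · have : {x : X | ∀ i, 0 ≤ x.2.2.2 i} = ⋂ i, {x : X | 0 ≤ x.2.2.2 i} := by ext; simp
      rw [this]
      refine MeasurableSet.iInter fun i => ?_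
      exact measurableSet_le measurable_const measurable_snd.snd.snd.eval
    · exact measurableSet_le hs1 measurable_const
    · exact measurableSet_le (meas_sum1 g hgmeas) measurable_const
    · exact measurableSet_le hs2 measurable_const
    · exact measurableSet_le (meas_sum2 g hgmeas) measurable_const
    · exact measurableSet_eq_fun hs1 hs2
    · exact measurableSet_lt (meas_sum2 c hc) (meas_sum1 c hc)
  refine ⟨hM, ?_⟩
  have himg : {z : Fin l → E | ∃ a z' a', (z, a, z', a') ∈ Mhat c g F l}
      = (fun x : X => x.1) '' (Mhat c g F l) := by
    ext z
    constructor
    · rintro ⟨a, z', a', hx⟩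
      exact ⟨(z, a, z', a'), hx, rfl⟩
    · rintro ⟨⟨z₀, a, z', a'⟩, hx, rfl⟩
      exact ⟨a, z', a', hx⟩
  rw [himg]
  exact (hM.analyticSet).image_of_continuous continuous_fst
end
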